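/- Let p > 0 and let F := {(x, 2^{-1/x}·sin(π·x^{-1/p})) : x ∈ (0,1]} ⊆ ℝ², the topologist's sine curve attenuated by the envelope g(x) = 2^{-1/x}. Then for every θ ∈ (0,1], lodim_θ(F) = updim_θ(F) = 1. -/

import Mathlib

open Set Metric Filter

/-- The upper θ-intermediate dimension of a set `E` in a metric space:
the infimum of all `s ≥ 0` such that for every `ε > 0` there is `δ₀ > 0` such that for all
`0 < δ < δ₀` there is a countable cover `𝒰` of `E` with `δ ≤ diam U ≤ δ ^ θ` for all `U ∈ 𝒰`
and `∑_{U ∈ 𝒰} (diam U) ^ s ≤ ε`. -/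
noncomputable def updim {X : Type*} [PseudoMetricSpace X] (θ : ℝ) (E : Set X) : ℝ :=
  sInf {s : ℝ | 0 ≤ s ∧ ∀ ε : ℝ, 0 < ε → ∃ δ₀ : ℝ, 0 < δ₀ ∧ ∀ δ : ℝ, 0 < δ → δ < δ₀ →
    ∃ 𝒰 : Set (Set X), 𝒰.Countable ∧ E ⊆ ⋃₀ 𝒰 ∧
      (∀ U ∈ 𝒰, δ ≤ diam U ∧ diam U ≤ δ ^ θ) ∧
      ∑' U : 𝒰, ENNReal.ofReal (diam (U : Set X) ^ s) ≤ ENNReal.ofReal ε}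

/-- The lower θ-intermediate dimension of a set `E` in a metric space. -/
noncomputable def lodim {X : Type*} [PseudoMetricSpace X] (θ : ℝ) (E : Set X) : ℝ :=
  sInf {s : ℝ | 0 ≤ s ∧ ∀ ε : ℝ, 0 < ε → ∀ δ₀ : ℝ, 0 < δ₀ → ∃ δ : ℝ, 0 < δ ∧ δ < δ₀ ∧
    ∃ 𝒰 : Set (Set X), 𝒰.Countable ∧ E ⊆ ⋃₀ 𝒰 ∧
      (∀ U ∈ 𝒰, δ ≤ diam U ∧ diam U ≤ δ ^ θ) ∧
      ∑' U : 𝒰, ENNReal.ofReal (diam (U : Set X) ^ s) ≤ ENNReal.ofReal ε}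

/-- The topologist's sine curve attenuated by the envelope `g(x) = 2^{-1/x}`:
`F = {(x, 2^{-1/x} sin(π x^{-1/p})) : x ∈ (0,1]} ⊆ ℝ²`. -/
noncomputable def expAttenSine (p : ℝ) : Set (EuclideanSpace ℝ (Fin 2)) :=
  {x | ∃ t : ℝ, 0 < t ∧ t ≤ 1 ∧ x 0 = t ∧
    x 1 = (2 : ℝ) ^ (-(1 / t)) * Real.sin (Real.pi * t ^ (-(1 / p)))}

/-!
The graph of `t ↦ 2^{-1/t} sin(π t^{-1/p})` over `(0,1]` is a Lipschitz curve: the envelope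
`2^{-1/t}` decays faster than any power of `t`, which absorbs the `t^{-1/p-1}` blow-up of the
derivative of the oscillating factor. A Lipschitz image of `(0,1]` is covered by `O(1/δ)` balls
of diameter `δ`, so every `s > 1` is admissible for the upper dimension. Conversely, the first
coordinate is a 1-Lipschitz map of the curve onto `(0,1]`, so a cover by sets of diameter at
most `1` satisfies `∑ |U|^s ≥ ∑ |U| ≥ 1` whenever `s ≤ 1`.
-/

open Bornology MeasureTheory Topology
open scoped NNReal ENNReal

section IntermediateDimension

variable {X : Type*} [PseudoMetricSpace X]

def HasIntermediateCover (E : Set X) (θ δ s ε : ℝ) : Prop :=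
  ∃ 𝒰 : Set (Set X), 𝒰.Countable ∧ E ⊆ ⋃₀ 𝒰 ∧
    (∀ U ∈ 𝒰, δ ≤ diam U ∧ diam U ≤ δ ^ θ) ∧
    ∑' U : 𝒰, ENNReal.ofReal (diam (U : Set X) ^ s) ≤ ENNReal.ofReal ε

def UpperAdmissible (θ : ℝ) (E : Set X) (s : ℝ) : Prop :=
  0 ≤ s ∧ ∀ ε : ℝ, 0 < ε → ∃ δ₀ : ℝ, 0 < δ₀ ∧ ∀ δ : ℝ, 0 < δ → δ < δ₀ →
    HasIntermediateCover E θ δ s ε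

def LowerAdmissible (θ : ℝ) (E : Set X) (s : ℝ) : Prop :=
  0 ≤ s ∧ ∀ ε : ℝ, 0 < ε → ∀ δ₀ : ℝ, 0 < δ₀ → ∃ δ : ℝ, 0 < δ ∧ δ < δ₀ ∧
    HasIntermediateCover E θ δ s ε

theorem updim_eq_sInf (θ : ℝ) (E : Set X) :
    updim θ E = sInf {s | UpperAdmissible θ E s} := rfl

theorem lodim_eq_sInf (θ : ℝ) (E : Set X) :
    lodim θ E = sInf {s | LowerAdmissible θ E s} := rfl

theorem UpperAdmissible.lowerAdmissible {θ s : ℝ} {E : Set X} (h : UpperAdmissible θ E s) :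
    LowerAdmissible θ E s := by
  refine ⟨h.1, fun ε hε δ₀ hδ₀ => ?_⟩
  obtain ⟨δ₁, hδ₁, hcover⟩ := h.2 ε hε
  have hδ : 0 < min δ₀ δ₁ / 2 := by positivity
  have hδ_lt : min δ₀ δ₁ / 2 < min δ₀ δ₁ := half_lt_self (lt_min hδ₀ hδ₁)
  exact ⟨_, hδ, hδ_lt.trans_le (min_le_left _ _),
    hcover _ hδ (hδ_lt.trans_le (min_le_right _ _))⟩

theorem lodim_eq_and_updim_eq_of_forall {θ a : ℝ} {E : Set X}
    (hupper : ∀ s, a < s → UpperAdmissible θ E s)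
    (hlower : ∀ s, LowerAdmissible θ E s → a ≤ s) :
    lodim θ E = a ∧ updim θ E = a := by
  rw [lodim_eq_sInf, updim_eq_sInf]
  have hbdd : ∀ S : Set ℝ, S ⊆ Ici 0 → BddBelow S := fun S hS => ⟨0, hS⟩
  have hup_le : sInf {s | UpperAdmissible θ E s} ≤ a :=
    le_of_forall_gt_imp_ge_of_dense fun s hs =>
      csInf_le (hbdd _ fun t ht => ht.1) (hupper s hs)
  have hupper_ne : {s | UpperAdmissible θ E s}.Nonempty := ⟨a + 1, hupper _ (lt_add_one a)⟩
  have hlo_le_up : sInf {s | LowerAdmissible θ E s} ≤ sInf {s | UpperAdmissible θ E s} :=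
    csInf_le_csInf (hbdd _ fun t ht => ht.1) hupper_ne
      fun _ => UpperAdmissible.lowerAdmissible
  have hle_lo : a ≤ sInf {s | LowerAdmissible θ E s} :=
    le_csInf (hupper_ne.mono fun _ => UpperAdmissible.lowerAdmissible) hlower
  exact ⟨by linarith, by linarith⟩

theorem volume_image_le_ofReal_diam {f : X → ℝ} (hf : LipschitzWith 1 f) {U : Set X}
    (hU : IsBounded U) : volume (f '' U) ≤ ENNReal.ofReal (diam U) :=
  (Real.volume_le_diam _).trans <| ediam_le_of_forall_dist_le <| by
    rintro _ ⟨x, hx, rfl⟩ _ ⟨y, hy, rfl⟩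
    simpa using (hf.dist_le_mul x y).trans (by simpa using dist_le_diam_of_mem hU hx hy)

theorem LowerAdmissible.one_le {θ s : ℝ} {E : Set X} {f : X → ℝ} (hf : LipschitzWith 1 f)
    (hE : 0 < volume (f '' E)) (hθ : 0 ≤ θ) (hs : LowerAdmissible θ E s) : 1 ≤ s := by
  by_contra! hs1
  obtain ⟨ε, -, hε_pos, hε_lt⟩ := ENNReal.lt_iff_exists_real_btwn.1 hE
  obtain ⟨δ, hδ, hδ1, 𝒰, h𝒰, hcov, hdiam, hsum⟩ :=
    hs.2 ε (ENNReal.ofReal_pos.1 hε_pos) 1 one_pos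
  have hterm (U : 𝒰) : volume (f '' U) ≤ ENNReal.ofReal (diam (U : Set X) ^ s) := by
    obtain ⟨hδU, hUδ⟩ := hdiam U U.2
    have hU_pos : 0 < diam (U : Set X) := hδ.trans_le hδU
    have hU_le_one : diam (U : Set X) ≤ 1 := hUδ.trans (Real.rpow_le_one hδ.le hδ1.le hθ)
    have hU_bdd : IsBounded (U : Set X) := by
      by_contra h
      exact hU_pos.ne' (diam_eq_zero_of_unbounded h)
    calc volume (f '' U) ≤ ENNReal.ofReal (diam (U : Set X)) :=
          volume_image_le_ofReal_diam hf hU_bdd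
      _ ≤ _ := ENNReal.ofReal_le_ofReal <| by
          simpa using Real.rpow_le_rpow_of_exponent_ge hU_pos hU_le_one hs1.le
  have hcov' : f '' E ⊆ ⋃ U : 𝒰, f '' U := by
    rintro _ ⟨x, hx, rfl⟩
    obtain ⟨U, hU, hxU⟩ := hcov hx
    exact mem_iUnion.2 ⟨⟨U, hU⟩, mem_image_of_mem f hxU⟩
  have : Countable 𝒰 := h𝒰.to_subtype
  have hvol : volume (f '' E) ≤ ENNReal.ofReal ε :=
    calc volume (f '' E) ≤ ∑' U : 𝒰, volume (f '' U) :=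
          (measure_mono hcov').trans (measure_iUnion_le _)
      _ ≤ _ := (ENNReal.tsum_le_tsum hterm).trans hsum
  exact hε_lt.not_ge hvol

theorem upperAdmissible_of_card_le {θ s d C : ℝ} {E : Set X} (hθ : θ ≤ 1) (hd : 0 ≤ d)
    (hds : d < s)
    (hcover : ∀ δ : ℝ, 0 < δ → δ < 1 → ∃ 𝒰 : Finset (Set X), E ⊆ ⋃₀ ↑𝒰 ∧
      (∀ U ∈ 𝒰, diam U = δ) ∧ (𝒰.card : ℝ) ≤ C * δ ^ (-d)) :
    UpperAdmissible θ E s := by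
  refine ⟨hd.trans hds.le, fun ε hε => ?_⟩
  have hlim : Tendsto (fun δ : ℝ => C * δ ^ (s - d)) (𝓝[>] 0) (𝓝 0) := by
    have h := (Real.continuousAt_rpow_const 0 (s - d) (.inr (sub_pos.2 hds).le)).const_mul C
    simpa [Real.zero_rpow (sub_pos.2 hds).ne'] using h.tendsto.mono_left nhdsWithin_le_nhds
  have hsmall : ∀ᶠ δ in 𝓝[>] 0, δ < 1 ∧ C * δ ^ (s - d) ≤ ε :=
    (eventually_nhdsWithin_of_eventually_nhds (gt_mem_nhds one_pos)).and
      (hlim.eventually (ge_mem_nhds hε))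
  obtain ⟨δ₀, hδ₀, hδ₀_small⟩ := (nhdsGT_basis (0 : ℝ)).eventually_iff.1 hsmall
  refine ⟨δ₀, hδ₀, fun δ hδ hδδ₀ => ?_⟩
  obtain ⟨hδ1, hδε⟩ := hδ₀_small ⟨hδ, hδδ₀⟩
  obtain ⟨𝒰, hcov, hdiam, hcard⟩ := hcover δ hδ hδ1
  refine ⟨𝒰, 𝒰.countable_toSet, hcov, fun U hU => ?_, ?_⟩
  · rw [hdiam U hU]
    simpa using Real.rpow_le_rpow_of_exponent_ge hδ hδ1.le hθ
  · have hsum : (𝒰.card : ℝ) * δ ^ s ≤ ε :=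
      calc (𝒰.card : ℝ) * δ ^ s ≤ C * δ ^ (-d) * δ ^ s := by gcongr
        _ = C * δ ^ (s - d) := by rw [mul_assoc, ← Real.rpow_add hδ, neg_add_eq_sub]
        _ ≤ ε := hδε
    rw [Finset.tsum_subtype' 𝒰 fun U => ENNReal.ofReal (diam U ^ s),
      Finset.sum_congr rfl fun U hU => by rw [hdiam U hU], Finset.sum_const, nsmul_eq_mul,
      ← ENNReal.ofReal_natCast, ← ENNReal.ofReal_mul (Nat.cast_nonneg _)]
    exact ENNReal.ofReal_le_ofReal hsum

end IntermediateDimension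

theorem exists_dist_min_succ_mul_le {w t : ℝ} (hw : 0 < w) (ht : t ∈ Ioc (0 : ℝ) 1) :
    ∃ k < ⌊1 / w⌋₊ + 1, dist t (min (((k : ℝ) + 1) * w) 1) ≤ w := by
  refine ⟨⌊t / w⌋₊, Nat.lt_succ_of_le (Nat.floor_le_floor (by gcongr; exact ht.2)), ?_⟩
  have hkt : ⌊t / w⌋₊ * w ≤ t := (le_div_iff₀ hw).1 (Nat.floor_le (div_pos ht.1 hw).le)
  have htk : t < (⌊t / w⌋₊ + 1) * w := (div_lt_iff₀ hw).1 (Nat.lt_floor_add_one _)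
  rw [dist_comm, Real.dist_eq, abs_of_nonneg (sub_nonneg.2 (le_min htk.le ht.2))]
  linarith [min_le_left ((⌊t / w⌋₊ + 1) * w) 1]

theorem exists_finset_closedBall_cover_image_Ioc {Y : Type*} [NormedAddCommGroup Y]
    [NormedSpace ℝ Y] [Nontrivial Y] {γ : ℝ → Y} {K : ℝ≥0} (hγ : LipschitzOnWith K γ (Ioc 0 1))
    {δ : ℝ} (hδ : 0 < δ) (hδ1 : δ ≤ 1) :
    ∃ 𝒰 : Finset (Set Y), γ '' Ioc 0 1 ⊆ ⋃₀ ↑𝒰 ∧ (∀ U ∈ 𝒰, diam U = δ) ∧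
      (𝒰.card : ℝ) ≤ (2 * K + 3) / δ := by
  set w := δ / (2 * (K + 1)) with hw_def
  have hw : 0 < w := by positivity
  set N := ⌊1 / w⌋₊ + 1
  set c : ℕ → ℝ := fun k => min ((k + 1) * w) 1
  refine ⟨(Finset.range N).image fun k => closedBall (γ (c k)) (δ / 2), ?_, ?_, ?_⟩
  · rintro _ ⟨t, ht, rfl⟩
    obtain ⟨k, hk, htk⟩ := exists_dist_min_succ_mul_le hw ht
    have hck : c k ∈ Ioc (0 : ℝ) 1 := ⟨lt_min (by positivity) one_pos, min_le_right _ _⟩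
    refine mem_sUnion.2 ⟨_, Finset.mem_image_of_mem _ (Finset.mem_range.2 hk), ?_⟩
    rw [mem_closedBall]
    calc dist (γ t) (γ (c k)) ≤ K * dist t (c k) := hγ.dist_le_mul t ht _ hck
      _ ≤ K * w := by gcongr
      _ ≤ δ / 2 := by
          rw [hw_def, mul_div_assoc', div_le_div_iff₀ (by positivity) two_pos]
          nlinarith
  · simp only [Finset.mem_image]
    rintro _ ⟨k, -, rfl⟩
    rw [diam_closedBall_eq _ (half_pos hδ).le]
    ring
  · calc ((Finset.range N).image _).card ≤ (N : ℝ) := by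
          exact_mod_cast Finset.card_image_le.trans (Finset.card_range N).le
      _ ≤ 1 / w + 1 := by push_cast [N]; linarith [Nat.floor_le (one_div_pos.2 hw).le]
      _ ≤ (2 * K + 3) / δ := by
          rw [hw_def, one_div_div, le_div_iff₀ hδ, add_mul, div_mul_cancel₀ _ hδ.ne']
          linarith

section AttenuatedSine
open Real

theorem rpow_neg_inv_mul_rpow_neg_le {b r t : ℝ} (hb : 1 < b) (ht : t ∈ Ioc (0 : ℝ) 1) :
    b ^ (-(1 / t)) * t ^ (-r) ≤ ⌈r⌉₊.factorial / log b ^ ⌈r⌉₊ := by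
  set n := ⌈r⌉₊
  have hlog : 0 < log b := log_pos hb
  have hx : 0 < log b / t := div_pos hlog ht.1
  have hexp : exp (-(log b / t)) ≤ n.factorial / (log b / t) ^ n := by
    rw [exp_neg, inv_eq_one_div, div_le_div_iff₀ (exp_pos _) (pow_pos hx n), one_mul,
      mul_comm, ← div_le_iff₀ (by positivity)]
    exact pow_div_factorial_le_exp _ hx.le n
  calc b ^ (-(1 / t)) * t ^ (-r) = exp (-(log b / t)) * t ^ (-r) := by
        rw [rpow_def_of_pos (zero_lt_one.trans hb)]; ring_nf
    _ ≤ n.factorial / (log b / t) ^ n * t ^ (-r) := by gcongr; exact rpow_nonneg ht.1.le _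
    _ = n.factorial / log b ^ n * (t ^ (n : ℝ) * t ^ (-r)) := by
        rw [div_pow, rpow_natCast]; field_simp
    _ = n.factorial / log b ^ n * t ^ ((n : ℝ) - r) := by
        rw [← rpow_add ht.1, sub_eq_add_neg]
    _ ≤ n.factorial / log b ^ n :=
        mul_le_of_le_one_right (by positivity)
          (rpow_le_one ht.1.le ht.2 (sub_nonneg.2 (Nat.le_ceil r)))

noncomputable def attenSine (p t : ℝ) : ℝ := (2 : ℝ) ^ (-(1 / t)) * sin (π * t ^ (-(1 / p)))

noncomputable def attenSineDeriv (p t : ℝ) : ℝ :=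
  log 2 * (2 ^ (-(1 / t)) * t ^ (-2 : ℝ)) * sin (π * t ^ (-(1 / p))) -
    π / p * (2 ^ (-(1 / t)) * t ^ (-(1 / p + 1))) * cos (π * t ^ (-(1 / p)))

theorem hasDerivAt_attenSine (p : ℝ) {t : ℝ} (ht : 0 < t) :
    HasDerivAt (attenSine p) (attenSineDeriv p t) t := by
  have henv : HasDerivAt (fun t : ℝ => (2 : ℝ) ^ (-(1 / t)))
      (log 2 * (t ^ 2)⁻¹ * 2 ^ (-(1 / t))) t := by
    simpa using ((hasDerivAt_inv ht.ne').neg).const_rpow two_pos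
  have hosc : HasDerivAt (fun t : ℝ => sin (π * t ^ (-(1 / p))))
      (cos (π * t ^ (-(1 / p))) * (π * (-(1 / p) * t ^ (-(1 / p) - 1)))) t :=
    ((hasDerivAt_rpow_const (Or.inl ht.ne')).const_mul π).sin
  refine (henv.mul hosc).congr_deriv ?_
  rw [attenSineDeriv, show t ^ (-2 : ℝ) = (t ^ 2)⁻¹ by rw [rpow_neg ht.le, rpow_two],
    show -(1 / p) - 1 = -(1 / p + 1) by ring]
  ring

theorem exists_lipschitzOnWith_attenSine (p : ℝ) :
    ∃ K : ℝ≥0, LipschitzOnWith K (attenSine p) (Ioc 0 1) := by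
  set B : ℝ → ℝ := fun r => ⌈r⌉₊.factorial / log 2 ^ ⌈r⌉₊
  have hbound (t : ℝ) (ht : t ∈ Ioc (0 : ℝ) 1) :
      |attenSineDeriv p t| ≤ log 2 * B 2 + |π / p| * B (1 / p + 1) := by
    have h₁ := rpow_neg_inv_mul_rpow_neg_le (r := 2) one_lt_two ht
    have h₂ := rpow_neg_inv_mul_rpow_neg_le (r := 1 / p + 1) one_lt_two ht
    have hlog : 0 < log 2 := log_pos one_lt_two
    have hnonneg (r : ℝ) : 0 ≤ (2 : ℝ) ^ (-(1 / t)) * t ^ (-r) :=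
      mul_nonneg (rpow_nonneg zero_le_two _) (rpow_nonneg ht.1.le _)
    calc |attenSineDeriv p t|
        ≤ log 2 * ((2 : ℝ) ^ (-(1 / t)) * t ^ (-2 : ℝ)) * |sin (π * t ^ (-(1 / p)))| +
            |π / p| * ((2 : ℝ) ^ (-(1 / t)) * t ^ (-(1 / p + 1))) *
              |cos (π * t ^ (-(1 / p)))| := by
          refine (abs_sub _ _).trans_eq ?_
          rw [abs_mul, abs_mul (log 2), abs_of_pos hlog, abs_of_nonneg (hnonneg 2),
            abs_mul (π / p * _), abs_mul (π / p), abs_of_nonneg (hnonneg _)]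
      _ ≤ log 2 * B 2 * 1 + |π / p| * B (1 / p + 1) * 1 := by
          gcongr
          exacts [abs_sin_le_one _, abs_cos_le_one _]
      _ = log 2 * B 2 + |π / p| * B (1 / p + 1) := by ring
  refine ⟨(log 2 * B 2 + |π / p| * B (1 / p + 1)).toNNReal,
    (convex_Ioc 0 1).lipschitzOnWith_of_nnnorm_hasDerivWithin_le
      (fun t ht => (hasDerivAt_attenSine p ht.1).hasDerivWithinAt) fun t ht => ?_⟩
  rw [← NNReal.coe_le_coe, coe_nnnorm, Real.coe_toNNReal']
  exact (hbound t ht).trans (le_max_left _ _)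

end AttenuatedSine

theorem LipschitzOnWith.euclideanPair {α : Type*} [PseudoMetricSpace α] {f g : α → ℝ}
    {K L : ℝ≥0} {s : Set α} (hf : LipschitzOnWith K f s) (hg : LipschitzOnWith L g s) :
    LipschitzOnWith (K + L) (fun t => !₂[f t, g t]) s := by
  refine LipschitzOnWith.of_dist_le_mul fun x hx y hy => ?_
  have h₁ := hf.dist_le_mul x hx y hy
  have h₂ := hg.dist_le_mul x hx y hy
  rw [EuclideanSpace.dist_eq, Fin.sum_univ_two]
  refine Real.sqrt_le_iff.2 ⟨by positivity, ?_⟩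
  simp only [Matrix.cons_val_zero, Matrix.cons_val_one, NNReal.coe_add]
  nlinarith [dist_nonneg (x := f x) (y := f y), dist_nonneg (x := g x) (y := g y),
    dist_nonneg (x := x) (y := y), K.2, L.2]

theorem expAttenSine_subset_image (p : ℝ) :
    expAttenSine p ⊆ (fun t => !₂[t, attenSine p t]) '' Ioc 0 1 := by
  rintro x ⟨t, ht₀, ht₁, hx₀, hx₁⟩
  refine ⟨t, ⟨ht₀, ht₁⟩, ?_⟩
  ext i
  fin_cases i
  exacts [hx₀.symm, hx₁.symm]

theorem Ioc_subset_image_expAttenSine (p : ℝ) :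
    Ioc 0 1 ⊆ (fun x : EuclideanSpace ℝ (Fin 2) => x 0) '' expAttenSine p :=
  fun t ht => ⟨!₂[t, attenSine p t], ⟨t, ht.1, ht.2, rfl, rfl⟩, rfl⟩

theorem lipschitzWith_euclideanSpace_apply {ι : Type*} [Fintype ι] (i : ι) :
    LipschitzWith 1 (fun x : EuclideanSpace ℝ ι => x i) :=
  LipschitzWith.of_dist_le_mul fun x y => by simpa using PiLp.dist_apply_le x y i

theorem stmt19_general (p : ℝ) (θ : ℝ) (hθ : 0 < θ) (hθ' : θ ≤ 1) :
    lodim θ (expAttenSine p) = 1 ∧ updim θ (expAttenSine p) = 1 := by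
  obtain ⟨K, hK⟩ := exists_lipschitzOnWith_attenSine p
  have hγ := (LipschitzWith.id.lipschitzOnWith (s := Ioc (0 : ℝ) 1)).euclideanPair hK
  refine lodim_eq_and_updim_eq_of_forall (fun s hs => ?_) fun s hs => ?_
  · refine upperAdmissible_of_card_le (C := 2 * ↑(1 + K) + 3) hθ' zero_le_one hs
      fun δ hδ hδ1 => ?_
    obtain ⟨𝒰, hcov, hdiam, hcard⟩ := exists_finset_closedBall_cover_image_Ioc hγ hδ hδ1.le
    refine ⟨𝒰, (expAttenSine_subset_image p).trans hcov, hdiam, ?_⟩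
    rwa [Real.rpow_neg_one, ← div_eq_mul_inv]
  · refine hs.one_le (lipschitzWith_euclideanSpace_apply 0) ?_ hθ.le
    calc (0 : ℝ≥0∞) < volume (Ioc (0 : ℝ) 1) := by simp
      _ ≤ _ := measure_mono (Ioc_subset_image_expAttenSine p)

theorem stmt19 (p : ℝ) (hp : 0 < p) (θ : ℝ) (hθ : 0 < θ) (hθ' : θ ≤ 1) :
    lodim θ (expAttenSine p) = 1 ∧ updim θ (expAttenSine p) = 1 :=
  stmt19_general p θ hθ hθ'
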